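/- A language L of well-matched words is a visibly pushdown language (accepted by a visibly pushdown automaton) if and only if L is recognised by a finite Ext-algebra. -/

import Mathlib

inductive VPKind : Type
  | call | ret | intern
deriving DecidableEq

class VPAlphabet (A : Type) where
  kind : A → VPKind

variable {A : Type} [VPAlphabet A]

inductive WellMatched : List A → Prop
  | nil : WellMatched []
  | intern (c : A) (hc : VPAlphabet.kind c = VPKind.intern) : WellMatched [c]
  | ext (a b : A) (w : List A) (ha : VPAlphabet.kind a = VPKind.call)
      (hb : VPAlphabet.kind b = VPKind.ret) (hw : WellMatched w) :
      WellMatched (a :: w ++ [b])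
  | append (u v : List A) (hu : WellMatched u) (hv : WellMatched v) : WellMatched (u ++ v)

theorem wm_insert {u v x : List A} (h : WellMatched (u ++ v)) (hx : WellMatched x) :
    WellMatched (u ++ x ++ v) := by
  suffices H : ∀ w, WellMatched w → ∀ u' v' : List A, w = u' ++ v' →
      WellMatched (u' ++ x ++ v') from H _ h u v rfl
  intro w hw
  induction hw with
  | nil =>
    intro u' v' huv
    obtain ⟨rfl, rfl⟩ := List.append_eq_nil_iff.mp huv.symm
    simpa using hx
  | intern c hc =>
    intro u' v' huv
    rcases u' with _ | ⟨a, u''⟩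
    · simp only [List.nil_append] at huv
      subst huv
      simpa using WellMatched.append x [c] hx (WellMatched.intern c hc)
    · have h1 : c = a := by injection huv
      have h2 : ([] : List A) = u'' ++ v' := by injection huv
      obtain ⟨rfl, rfl⟩ := List.append_eq_nil_iff.mp h2.symm
      subst h1
      simpa using WellMatched.append [c] x (WellMatched.intern c hc) hx
  | ext a b w' ha hb hw' ih =>
    intro u' v' huv
    rcases u' with _ | ⟨a'', u''⟩
    · simp only [List.nil_append] at huv
      subst huv
      simpa using WellMatched.append x _ hx (WellMatched.ext a b w' ha hb hw')
    · have h1 : a = a'' := by injection huv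
      have huv2 : w' ++ [b] = u'' ++ v' := by injection huv
      subst h1
      rcases List.eq_nil_or_concat v' with rfl | ⟨v'', b'', rfl⟩
      · have h3 : u'' = w' ++ [b] := by simpa using huv2.symm
        subst h3
        simpa using WellMatched.append _ x (WellMatched.ext a b w' ha hb hw') hx
      · have h4 : w' = u'' ++ v'' ∧ [b] = [b''] :=
          List.append_inj' (by simpa [List.append_assoc] using huv2) rfl
        obtain ⟨rfl, hb'⟩ := h4
        have hbb : b = b'' := by injection hb'
        subst hbb
        have := WellMatched.ext a b _ ha hb (ih u'' v'' rfl)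
        simpa [List.append_assoc] using this
  | append w₁ w₂ h₁ h₂ ih₁ ih₂ =>
    intro u' v' huv
    rcases List.append_eq_append_iff.mp huv with ⟨a', rfl, rfl⟩ | ⟨c', rfl, rfl⟩
    · have := WellMatched.append _ _ h₁ (ih₂ a' v' rfl)
      simpa [List.append_assoc] using this
    · have := WellMatched.append _ _ (ih₁ u' c' rfl) h₂
      simpa [List.append_assoc] using this

def WM (A : Type) [VPAlphabet A] : Type := {w : List A // WellMatched w}

instance : Monoid (WM A) where
  one := ⟨[], WellMatched.nil⟩
  mul u v := ⟨u.1 ++ v.1, WellMatched.append _ _ u.2 v.2⟩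
  mul_assoc a b c := Subtype.ext (List.append_assoc _ _ _)
  one_mul a := Subtype.ext (List.nil_append _)
  mul_one a := Subtype.ext (List.append_nil _)

@[simp] theorem WM.mul_val (x y : WM A) : (x * y).1 = x.1 ++ y.1 := rfl
@[simp] theorem WM.one_val : (1 : WM A).1 = [] := rfl

instance : Nonempty (WM A) := ⟨1⟩

def extWord (u v : List A) (h : WellMatched (u ++ v)) (x : WM A) : WM A :=
  ⟨u ++ x.1 ++ v, wm_insert h x.2⟩

@[simp] theorem extWord_val (u v : List A) (h : WellMatched (u ++ v)) (x : WM A) :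
    (extWord u v h x).1 = u ++ x.1 ++ v := rfl

structure ExtAlgebra (R : Type*) [Monoid R] where
  O : Submonoid (Function.End R)
  mulLeft_mem : ∀ r : R, (fun x => r * x) ∈ O
  mulRight_mem : ∀ r : R, (fun x => x * r) ∈ O

structure ExtAlgHom {R S : Type*} [Monoid R] [Monoid S]
    (ER : ExtAlgebra R) (ES : ExtAlgebra S) where
  toMonoidHom : R →* S
  opMap : ER.O →* ES.O
  compat : ∀ (e : ER.O) (r : R),
    (opMap e : Function.End S) (toMonoidHom r) = toMonoidHom ((e : Function.End R) r)

/-- A morphism of `Ext`-algebras from the free `Ext`-algebra of well-matched words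
into an `Ext`-algebra `R`, given by its monoid part and by the images of the
operations `ext_{u,v}`. -/
structure ExtHomWM (A : Type) [VPAlphabet A] {R : Type*} [Monoid R] (ER : ExtAlgebra R) where
  toMonoidHom : WM A →* R
  op : ∀ u v : List A, WellMatched (u ++ v) → ER.O
  op_one : op [] [] WellMatched.nil = 1
  op_comp : ∀ u v (h : WellMatched (u ++ v)) u' v' (h' : WellMatched (u' ++ v'))
      (h'' : WellMatched ((u ++ u') ++ (v' ++ v))),
      op (u ++ u') (v' ++ v) h'' = op u v h * op u' v' h'
  op_spec : ∀ u v (h : WellMatched (u ++ v)) (x : WM A),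
      (op u v h : Function.End R) (toMonoidHom x) = toMonoidHom (extWord u v h x)

/-- `R` recognises `L` via the morphism `φ` when `L` is the preimage of its image. -/
def Recognises {R : Type*} [Monoid R] {ER : ExtAlgebra R}
    (φ : ExtHomWM A ER) (L : Set (WM A)) : Prop :=
  L = φ.toMonoidHom ⁻¹' (φ.toMonoidHom '' L)

/-- The free `Ext`-algebra structure on the monoid of well-matched words. -/
def freeExt (A : Type) [VPAlphabet A] : ExtAlgebra (WM A) where
  O :=
    { carrier := {e | ∃ u v, ∃ h : WellMatched (u ++ v), ∀ x : WM A, e x = extWord u v h x}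
      one_mem' := ⟨[], [], WellMatched.nil, fun x => Subtype.ext (by show x.1 = [] ++ x.1 ++ []; simp)⟩
      mul_mem' := by
        rintro e f ⟨u, v, h, he⟩ ⟨u', v', h', hf⟩
        have h'' : WellMatched ((u ++ u') ++ (v' ++ v)) := by
          simpa [List.append_assoc] using wm_insert h h'
        exact ⟨u ++ u', v' ++ v, h'', fun x => by
          rw [show (e * f) x = e (f x) from rfl, hf, he]
          exact Subtype.ext (by simp [List.append_assoc])⟩ }
  mulLeft_mem r := ⟨r.1, [], by simpa using r.2, fun x => Subtype.ext (by simp)⟩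
  mulRight_mem r := ⟨[], r.1, by simpa using r.2, fun x => Subtype.ext (by simp)⟩

/-- A sub-`Ext`-algebra of an `Ext`-algebra. -/
structure SubExt {S : Type*} [Monoid S] (ES : ExtAlgebra S) where
  carrier : Submonoid S
  ops : Submonoid (Function.End S)
  ops_le : ops ≤ ES.O
  maps_to : ∀ e ∈ ops, ∀ x ∈ carrier, e x ∈ carrier
  mulLeft_mem : ∀ r ∈ carrier, (fun x => r * x) ∈ ops
  mulRight_mem : ∀ r ∈ carrier, (fun x => x * r) ∈ ops

/-- The `Ext`-algebra structure induced on a sub-`Ext`-algebra. -/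
def SubExt.toExtAlgebra {S : Type*} [Monoid S] {ES : ExtAlgebra S} (T : SubExt ES) :
    ExtAlgebra T.carrier where
  O :=
    { carrier := {e : Function.End T.carrier | ∃ f ∈ T.ops, ∀ x : T.carrier, (e x : S) = f x}
      one_mem' := ⟨1, T.ops.one_mem, fun _ => rfl⟩
      mul_mem' := by
        rintro e e' ⟨f, hf, he⟩ ⟨f', hf', he'⟩
        exact ⟨f * f', mul_mem hf hf', fun x => by
          rw [show (e * e') x = e (e' x) from rfl, show (f * f') (x : S) = f (f' x) from rfl,
            ← he', he]⟩ }
  mulLeft_mem r := ⟨fun x => (r : S) * x, T.mulLeft_mem r r.2, fun _ => rfl⟩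
  mulRight_mem r := ⟨fun x => x * (r : S), T.mulRight_mem r r.2, fun _ => rfl⟩

/-- `ER` is a quotient of `ES` if there is a surjective morphism of `Ext`-algebras
from `ES` onto `ER`. -/
def IsQuotientOf {R S : Type*} [Monoid R] [Monoid S]
    (ER : ExtAlgebra R) (ES : ExtAlgebra S) : Prop :=
  ∃ h : ExtAlgHom ES ER, Function.Surjective h.toMonoidHom ∧ Function.Surjective h.opMap

/-- Bundled finite `Ext`-algebras. -/
structure BExt : Type 1 where
  carrier : Type
  [mon : Monoid carrier]
  [fin : Finite carrier]
  ext : ExtAlgebra carrier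

attribute [instance] BExt.mon BExt.fin

/-! ### Visibly pushdown automata -/

structure VPA (A : Type) [VPAlphabet A] where
  Q : Type
  [finQ : Finite Q]
  q0 : Q
  Γ : Type
  [finΓ : Finite Γ]
  bot : Γ
  δ : A → Q → Γ → Q × List Γ
  F : Set Q
  call_spec : ∀ a q G, VPAlphabet.kind a = VPKind.call → ∃ G', (δ a q G).2 = [G', G]
  ret_spec : ∀ a q G, VPAlphabet.kind a = VPKind.ret → (δ a q G).2 = []
  int_spec : ∀ a q G, VPAlphabet.kind a = VPKind.intern → (δ a q G).2 = [G]

attribute [instance] VPA.finQ VPA.finΓ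

def VPA.runAux (M : VPA A) : List A → M.Q → List M.Γ → M.Q × List M.Γ
  | [], q, s => (q, s)
  | _ :: w, q, [] => M.runAux w q []
  | a :: w, q, G :: s => M.runAux w (M.δ a q G).1 ((M.δ a q G).2 ++ s)

def VPA.Accepts (M : VPA A) (w : List A) : Prop :=
  (M.runAux w M.q0 [M.bot]).1 ∈ M.F ∧ (M.runAux w M.q0 [M.bot]).2 = [M.bot]

/-- The language of well-matched words accepted by a VPA. -/
def VPA.lang (M : VPA A) : Set (WM A) := {w | M.Accepts w.1}

/-- `L` is a visibly pushdown language: it is accepted by a visibly pushdown automaton. -/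
def IsVPL (L : Set (WM A)) : Prop := ∃ M : VPA A, L = M.lang

/-!
A visibly pushdown automaton reading a well-matched word from a stack with top `G` ends with
the same stack, in a state that depends only on the initial state and on `G`. So a
well-matched word acts through its behaviour `(q, G) ↦ q'`, and these behaviours form a finite
monoid. The behaviour of `u x v` depends only on that of `x`, so every operation `ext_{u,v}`
descends to the image of the words in this monoid, which is then a finite `Ext`-algebra
recognising the language.

Conversely, a finite `Ext`-algebra is simulated by an automaton whose state is the value of
the factor read since the last pending call: a call `a` pushes this value together with `a`
and restarts from `1`, and the matching return `b` combines the pushed value `r` with the value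
`s` of the enclosed word into `r * ext_{a,b}(s)`.
-/

open VPAlphabet

def ExtAlgebra.full (R : Type*) [Monoid R] : ExtAlgebra R where
  O := ⊤
  mulLeft_mem _ := trivial
  mulRight_mem _ := trivial

def IsExtCongr {R : Type*} [Monoid R] (ψ : WM A →* R) : Prop :=
  ∀ u v (h : WellMatched (u ++ v)) x y, ψ x = ψ y →
    ψ (extWord u v h x) = ψ (extWord u v h y)

theorem IsExtCongr.mrangeRestrict {R : Type*} [Monoid R] {ψ : WM A →* R} (hψc : IsExtCongr ψ) :
    IsExtCongr ψ.mrangeRestrict := fun u v h _ _ hxy =>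
  Subtype.ext (hψc u v h _ _ (congrArg Subtype.val hxy))

namespace ExtHomWM

section OfSurjective

variable {R : Type*} [Monoid R] (ψ : WM A →* R) (hψ : Function.Surjective ψ)

noncomputable def extOfSurjective (u v : List A) (h : WellMatched (u ++ v)) : Function.End R :=
  fun r => ψ (extWord u v h (Function.surjInv hψ r))

theorem extOfSurjective_apply (hψc : IsExtCongr ψ) (u v : List A) (h : WellMatched (u ++ v))
    (x : WM A) : extOfSurjective ψ hψ u v h (ψ x) = ψ (extWord u v h x) :=
  hψc u v h _ _ (Function.surjInv_eq hψ _)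

noncomputable def ofSurjective (hψc : IsExtCongr ψ) : ExtHomWM A (ExtAlgebra.full R) where
  toMonoidHom := ψ
  op u v h := ⟨extOfSurjective ψ hψ u v h, trivial⟩
  op_one := Subtype.ext <| funext fun r => by
    obtain ⟨x, rfl⟩ := hψ r
    exact (extOfSurjective_apply ψ hψ hψc [] [] _ x).trans (congrArg ψ (Subtype.ext (by simp)))
  op_comp u v h u' v' h' h'' := Subtype.ext <| funext fun r => by
    obtain ⟨x, rfl⟩ := hψ r
    change extOfSurjective ψ hψ _ _ h'' (ψ x) =
      extOfSurjective ψ hψ u v h (extOfSurjective ψ hψ u' v' h' (ψ x))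
    simp only [extOfSurjective_apply ψ hψ hψc]
    exact congrArg ψ (Subtype.ext (by simp))
  op_spec u v h x := extOfSurjective_apply ψ hψ hψc u v h x

end OfSurjective

theorem recognises_of_eq_preimage {R : Type*} [Monoid R] {ER : ExtAlgebra R}
    (φ : ExtHomWM A ER) {L : Set (WM A)} {S : Set R} (hL : L = φ.toMonoidHom ⁻¹' S) :
    Recognises φ L := by
  subst hL
  exact subset_antisymm (Set.subset_preimage_image _ _)
    (Set.preimage_mono (Set.image_preimage_subset _ _))

end ExtHomWM

namespace VPA

variable (M : VPA A)

theorem runAux_append (u v : List A) (q : M.Q) (s : List M.Γ) :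
    M.runAux (u ++ v) q s = M.runAux v (M.runAux u q s).1 (M.runAux u q s).2 := by
  induction u generalizing q s with
  | nil => rfl
  | cons a u ih => cases s <;> simp [VPA.runAux, ih]

theorem runAux_stack_nil (w : List A) (q : M.Q) : M.runAux w q [] = (q, []) := by
  induction w with
  | nil => rfl
  | cons a w ih => simpa [VPA.runAux] using ih

theorem runAux_cons_of_wellMatched {w : List A} (hw : WellMatched w) (q : M.Q) (G : M.Γ)
    (τ : List M.Γ) : M.runAux w q (G :: τ) = ((M.runAux w q [G]).1, G :: τ) := by
  induction hw generalizing q G τ with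
  | nil => rfl
  | intern c hc => simp [VPA.runAux, M.int_spec c q G hc]
  | ext a b w ha hb _ ih =>
    obtain ⟨G', hG'⟩ := M.call_spec a q G ha
    have hrun : ∀ τ : List M.Γ, M.runAux (a :: w ++ [b]) q (G :: τ) =
        ((M.δ b (M.runAux w (M.δ a q G).1 [G']).1 G').1, G :: τ) := fun τ => by
      simp [VPA.runAux, runAux_append, hG', ih _ G' (G :: τ), M.ret_spec b _ G' hb]
    rw [hrun, hrun]
  | append u v _ _ ihu ihv => rw [runAux_append, runAux_append, ihu, ihu q G [], ihv, ihv _ G []]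

def Beh : Type := M.Q → M.Γ → M.Q

instance : Monoid M.Beh where
  one q _ := q
  mul f g q G := g (f q G) G
  mul_assoc _ _ _ := rfl
  one_mul _ := rfl
  mul_one _ := rfl

instance : Finite M.Beh := inferInstanceAs (Finite (M.Q → M.Γ → M.Q))

def behHom : WM A →* M.Beh where
  toFun x q G := (M.runAux x.1 q [G]).1
  map_one' := rfl
  map_mul' x y := by
    funext q G
    change (M.runAux (x.1 ++ y.1) q [G]).1 = (M.runAux y.1 (M.runAux x.1 q [G]).1 [G]).1
    rw [runAux_append, M.runAux_cons_of_wellMatched x.2 q G []]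

theorem behHom_apply (x : WM A) (q : M.Q) (G : M.Γ) :
    M.behHom x q G = (M.runAux x.1 q [G]).1 := rfl

theorem runAux_eq_of_behHom_eq {x y : WM A} (hxy : M.behHom x = M.behHom y) :
    M.runAux x.1 = M.runAux y.1 := by
  funext q s
  cases s with
  | nil => rw [runAux_stack_nil, runAux_stack_nil]
  | cons G τ =>
    rw [M.runAux_cons_of_wellMatched x.2, M.runAux_cons_of_wellMatched y.2, ← behHom_apply,
      ← behHom_apply, hxy]

theorem isExtCongr_behHom : IsExtCongr M.behHom := fun u v h _ _ hxy => by
  funext q G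
  simp only [behHom_apply, extWord_val, runAux_append, M.runAux_eq_of_behHom_eq hxy]

theorem lang_eq_preimage_behHom : M.lang = M.behHom ⁻¹' {f | f M.q0 M.bot ∈ M.F} := by
  ext x
  change (_ ∧ _) ↔ _
  rw [M.runAux_cons_of_wellMatched x.2 M.q0 M.bot [], and_iff_left rfl]
  rfl

end VPA

namespace ExtHomWM

variable {R : Type} [Monoid R] {ER : ExtAlgebra R} (φ : ExtHomWM A ER)

/-- `none` is the bottom of the stack; it is never popped on a well-matched input, so the
value `1` given to that case is arbitrary. -/
def step (a : A) (s : R) (G : Option (R × {c : A // kind c = .call})) :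
    R × List (Option (R × {c : A // kind c = .call})) :=
  match h : kind a with
  | .call => (1, [some (s, ⟨a, h⟩), G])
  | .ret => (G.elim 1 fun rc =>
      rc.1 * (φ.op [rc.2.1] [a] (.ext _ a [] rc.2.2 h .nil) : Function.End R) s, [])
  | .intern => (s * φ.toMonoidHom ⟨[a], .intern a h⟩, [G])

theorem step_of_call {a : A} (ha : kind a = .call) (s : R) (G) :
    φ.step a s G = (1, [some (s, ⟨a, ha⟩), G]) := by
  unfold step; split <;> rename_i hk <;> first | rfl | cases ha.symm.trans hk

theorem step_of_ret {b : A} (hb : kind b = .ret) (s : R) (G) :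
    φ.step b s G = (G.elim 1 fun rc =>
      rc.1 * (φ.op [rc.2.1] [b] (.ext _ b [] rc.2.2 hb .nil) : Function.End R) s, []) := by
  unfold step; split <;> rename_i hk <;> first | rfl | cases hb.symm.trans hk

theorem step_of_intern {c : A} (hc : kind c = .intern) (s : R) (G) :
    φ.step c s G = (s * φ.toMonoidHom ⟨[c], .intern c hc⟩, [G]) := by
  unfold step; split <;> rename_i hk <;> first | rfl | cases hc.symm.trans hk

abbrev toVPA [Finite R] [Finite A] (F : Set R) : VPA A where
  Q := R
  q0 := 1
  Γ := Option (R × {c : A // kind c = .call})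
  bot := none
  δ := φ.step
  F := F
  call_spec a q G ha := ⟨_, by rw [φ.step_of_call ha]⟩
  ret_spec a q G hb := by rw [φ.step_of_ret hb]
  int_spec a q G hc := by rw [φ.step_of_intern hc]

variable [Finite R] [Finite A]

theorem runAux_toVPA (F : Set R) {w : List A} (hw : WellMatched w) (s : R)
    (G : Option (R × {c : A // kind c = .call})) (τ) :
    (φ.toVPA F).runAux w s (G :: τ) = (s * φ.toMonoidHom (⟨w, hw⟩ : WM A), G :: τ) := by
  induction hw generalizing s G τ with
  | nil =>
    refine congrArg (·, G :: τ) ?_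
    rw [show φ.toMonoidHom ⟨[], .nil⟩ = φ.toMonoidHom 1 from rfl, map_one, mul_one]
  | intern c hc =>
    change (φ.toVPA F).runAux [] (φ.step c s G).1 ((φ.step c s G).2 ++ τ) = _
    rw [φ.step_of_intern hc]
    rfl
  | ext a b w ha hb hw ih =>
    have hop := φ.op_spec [a] [b] (.ext a b [] ha hb .nil) ⟨w, hw⟩
    change (φ.toVPA F).runAux (w ++ [b]) (φ.step a s G).1 ((φ.step a s G).2 ++ τ) = _
    rw [φ.step_of_call ha, (φ.toVPA F).runAux_append, List.cons_append, List.cons_append,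
      List.nil_append, ih, one_mul]
    change (φ.toVPA F).runAux [] (φ.step b _ _).1 ((φ.step b _ _).2 ++ G :: τ) = _
    rw [φ.step_of_ret hb]
    exact congrArg (·, G :: τ) (congrArg (s * ·) hop)
  | append u v hu hv ihu ihv =>
    rw [(φ.toVPA F).runAux_append, ihu, ihv, mul_assoc,
      ← φ.toMonoidHom.map_mul (⟨u, hu⟩ : WM A) ⟨v, hv⟩]
    rfl

theorem lang_toVPA (F : Set R) : (φ.toVPA F).lang = φ.toMonoidHom ⁻¹' F := by
  ext x
  change ((φ.toVPA F).runAux x.1 1 [none]).1 ∈ F ∧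
    ((φ.toVPA F).runAux x.1 1 [none]).2 = [none] ↔ φ.toMonoidHom x ∈ F
  rw [φ.runAux_toVPA F x.2, one_mul, and_iff_left rfl]
  rfl

end ExtHomWM

theorem VPA.exists_recognises_lang (M : VPA A) :
    ∃ (R : BExt) (φ : ExtHomWM A R.ext), Recognises φ M.lang := by
  exact ⟨⟨MonoidHom.mrange M.behHom, ExtAlgebra.full _⟩,
    ExtHomWM.ofSurjective _ M.behHom.mrangeRestrict_surjective M.isExtCongr_behHom.mrangeRestrict,
    ExtHomWM.recognises_of_eq_preimage _
      (S := Subtype.val ⁻¹' {f : M.Beh | f M.q0 M.bot ∈ M.F}) M.lang_eq_preimage_behHom⟩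

theorem IsVPL.of_recognises [Finite A] {R : Type} [Monoid R] [Finite R] {ER : ExtAlgebra R}
    {φ : ExtHomWM A ER} {L : Set (WM A)} (h : Recognises φ L) : IsVPL L :=
  ⟨φ.toVPA _, h.trans (φ.lang_toVPA _).symm⟩

/-- A language of well-matched words is a visibly pushdown language iff it is
recognised by a finite `Ext`-algebra. -/
theorem statement5 {A : Type} [VPAlphabet A] [Finite A] (L : Set (WM A)) :
    IsVPL L ↔ ∃ (R : BExt) (φ : ExtHomWM A R.ext), Recognises φ L := by
  constructor
  · rintro ⟨M, rfl⟩
    exact M.exists_recognises_lang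
  · rintro ⟨R, φ, h⟩
    exact IsVPL.of_recognises h
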